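/- arXiv:1108.3724 — 2 statements merged into one kernel-verified Lean document; each statement's English description precedes it below -/
import Mathlib

section
/- The inclusion functor W ↪ PSh(C) admits a left adjoint ω; that is, W is a reflective full subcategory of the presheaf category PSh(C). (In the paper, ω(A) is called the Whitney category associated to the presheaf A.) -/
/-!
For a `J`-covering sieve `S` of `d`, the Yoneda form of the sheaf condition says that `ι.op ⋙ P`
is a sheaf for `S` iff precomposition with `S ↪ yoneda d` is bijective on maps into `ι.op ⋙ P`.
Through the adjunction `Lan_{ι.op} ⊣ (ι.op ⋙ -)` this says that `P` is orthogonal to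
`Lan_{ι.op} S ⟶ Lan_{ι.op} (yoneda d)`. So `W` is the subcategory of objects orthogonal to a small
set of morphisms in the locally presentable category `PSh(C)`, and such subcategories are
reflective by the orthogonal-reflection construction.
-/

open CategoryTheory CategoryTheory.Limits

universe u v

namespace CategoryTheory

lemma exists_isCardinalPresentable_forall {C : Type*} [Category C] {ι : Type*} [Small.{u} ι]
    (X : ι → C) [∀ i, IsPresentable.{u} (X i)] :
    ∃ (κ : Cardinal.{u}) (_ : Fact κ.IsRegular), ∀ i, IsCardinalPresentable (X i) κ := by
  choose κ _ _ using fun i ↦ (inferInstance : IsPresentable.{u} (X i)).exists_cardinal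
  obtain ⟨κ', hκ', hlt⟩ :=
    HasCardinalLT.exists_regular_cardinal_forall.{u} fun i ↦ (κ i).ord.ToType
  have : Fact κ'.IsRegular := ⟨hκ'⟩
  refine ⟨κ', this, fun i ↦ ?_⟩
  have : κ i < κ' := by simpa [hasCardinalLT_iff_cardinal_mk_lt] using hlt i
  exact isCardinalPresentable_of_le _ this.le

lemma MorphismProperty.isRightAdjoint_ι_isLocal_of_isLocallyPresentable {C : Type*} [Category C]
    [IsLocallyPresentable.{u} C] (W : MorphismProperty C) [IsSmall.{u} W] :
    W.isLocal.ι.IsRightAdjoint := by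
  -- only to make `C` cocomplete
  obtain ⟨κ₀, _, _⟩ := IsLocallyPresentable.exists_cardinal.{u} C
  obtain ⟨κ, _, hκ⟩ := exists_isCardinalPresentable_forall.{u}
    (Sum.elim (fun f : W.toSet ↦ f.1.left) (fun f : W.toSet ↦ f.1.right))
  exact isRightAdjoint_ι_isLocal W κ fun _ _ f hf ↦
    ⟨hκ (.inl ⟨CategoryTheory.Arrow.mk f, hf⟩), hκ (.inr ⟨CategoryTheory.Arrow.mk f, hf⟩)⟩

lemma Adjunction.isLocal_ofHoms_map_iff {C D : Type*} [Category C] [Category D]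
    {L : C ⥤ D} {R : D ⥤ C} (adj : L ⊣ R) {ι : Type*} {A B : ι → C} (f : ∀ i, A i ⟶ B i)
    (Z : D) :
    (MorphismProperty.ofHoms fun i ↦ L.map (f i)).isLocal Z ↔
      (MorphismProperty.ofHoms f).isLocal (R.obj Z) := by
  constructor
  · rintro h _ _ _ ⟨i⟩
    exact (adj.map_comp_bijective_iff (f i) Z).1 (h _ ⟨i⟩)
  · rintro h _ _ _ ⟨i⟩
    exact (adj.map_comp_bijective_iff (f i) Z).2 (h _ ⟨i⟩)

lemma Presieve.isSheaf_iff_isLocal_ofHoms_functorInclusion {C : Type*} [Category.{v} C]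
    (J : GrothendieckTopology C) (P : Cᵒᵖ ⥤ Type v) :
    Presieve.IsSheaf J P ↔ (MorphismProperty.ofHoms fun S : Σ X, J.Cover X ↦
      (S.2 : Sieve S.1).functorInclusion).isLocal P := by
  constructor
  · rintro h _ _ _ ⟨⟨X, S⟩⟩
    exact Function.bijective_iff_existsUnique _ |>.2
      (isSheafFor_iff_yonedaSheafCondition.1 (h _ S.2))
  · intro h X S hS
    exact isSheafFor_iff_yonedaSheafCondition.2
      (Function.bijective_iff_existsUnique _ |>.1 (h _ (.mk (⟨X, ⟨S, hS⟩⟩ : Σ X, J.Cover X))))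

abbrev Functor.lanCoverInclusions {C D : Type u} [SmallCategory C] [SmallCategory D]
    (ι : D ⥤ C) (J : GrothendieckTopology D) : MorphismProperty (Cᵒᵖ ⥤ Type u) :=
  MorphismProperty.ofHoms fun S : Σ d, J.Cover d ↦
    ι.op.lan.map (S.2 : Sieve S.1).functorInclusion

lemma Functor.isLocal_lanCoverInclusions_iff {C D : Type u} [SmallCategory C]
    [SmallCategory D] (ι : D ⥤ C) (J : GrothendieckTopology D) (P : Cᵒᵖ ⥤ Type u) :
    (ι.lanCoverInclusions J).isLocal P ↔ Presieve.IsSheaf J (ι.op ⋙ P) :=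
  ((ι.op.lanAdjunction (Type u)).isLocal_ofHoms_map_iff _ P).trans
    (Presieve.isSheaf_iff_isLocal_ofHoms_functorInclusion J _).symm

end CategoryTheory

/-- The inclusion of the full subcategory `W` (presheaves on `C` whose
restriction along `ι : D ⥤ C` is a `J`-sheaf) into `PSh(C)` admits a left adjoint `ω`;
that is, `W` is a reflective full subcategory of `PSh(C)`. -/
theorem whitney_inclusion_isRightAdjoint {C D : Type u} [SmallCategory C] [SmallCategory D]
    (ι : D ⥤ C) (J : GrothendieckTopology D) :
    (ObjectProperty.ι
      fun P : Cᵒᵖ ⥤ Type u => Presieve.IsSheaf J (ι.op ⋙ P)).IsRightAdjoint ∧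
    Nonempty (Reflective (ObjectProperty.ι
      fun P : Cᵒᵖ ⥤ Type u => Presieve.IsSheaf J (ι.op ⋙ P))) := by
  have hW : (fun P : Cᵒᵖ ⥤ Type u => Presieve.IsSheaf J (ι.op ⋙ P)) =
      (ι.lanCoverInclusions J).isLocal :=
    funext fun P ↦ propext (ι.isLocal_lanCoverInclusions_iff J P).symm
  rw [hW]
  have := (ι.lanCoverInclusions J).isRightAdjoint_ι_isLocal_of_isLocallyPresentable
  exact ⟨this, ⟨⟨_, .ofIsRightAdjoint _⟩⟩⟩
end

section
/- The relation on categories defined by 'there exists a strong equivalence span between A and B' is an equivalence relation: it is reflexive, symmetric, and transitive. In particular, if there are fully faithful, surjective-on-objects functors D ⥤ A, D ⥤ B and fully faithful, surjective-on-objects functors E ⥤ B, E ⥤ C, then there exist a category P and fully faithful, surjective-on-objects functors P ⥤ A and P ⥤ C. -/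
/-!
A fully faithful functor that is surjective on objects is an equivalence, so a strong
equivalence span `A ⟵ P ⟶ B` yields `A ≌ P ≌ B`. Conversely an equivalence `F : A ⥤ B`
yields the span `A ⟵ Γ ⟶ B` through its "isomorphism graph" `Γ`, whose objects are triples
`(a, b, F.obj a ≅ b)` and whose morphisms are those of `A`. Hence strong equivalence spans
exist exactly between equivalent categories, and equivalence of categories is an
equivalence relation.
-/

open CategoryTheory

universe v u

/-- A strong equivalence span between categories `A` and `B`: a span of functors
`A ⟵F P ⟶G B` in which both `F` and `G` are fully faithful and surjective on objects. -/
def StrongEquivSpan (A B : Type u) [Category.{v} A] [Category.{v} B] : Prop :=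
  ∃ (P : Cat.{v, max u v}) (F : P ⥤ A) (G : P ⥤ B),
    F.Full ∧ F.Faithful ∧ Function.Surjective F.obj ∧
    G.Full ∧ G.Faithful ∧ Function.Surjective G.obj

namespace CategoryTheory

variable {A B D : Type*} [Category A] [Category B] [Category D]

theorem Functor.isEquivalence_of_surjective_obj (F : D ⥤ A) [F.Full] [F.Faithful]
    (hF : Function.Surjective F.obj) : F.IsEquivalence :=
  have := F.essSurj_of_surj hF
  { }

theorem nonempty_equivalence_of_surjective_span (F : D ⥤ A) (G : D ⥤ B)
    [F.Full] [F.Faithful] [G.Full] [G.Faithful]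
    (hF : Function.Surjective F.obj) (hG : Function.Surjective G.obj) :
    Nonempty (A ≌ B) :=
  have := F.isEquivalence_of_surjective_obj hF
  have := G.isEquivalence_of_surjective_obj hG
  ⟨F.asEquivalence.symm.trans G.asEquivalence⟩

namespace Functor

variable (F : A ⥤ B)

abbrev IsoGraph : Type _ :=
  InducedCategory A (fun x : Σ a : A, Σ b : B, (F.obj a ≅ b) => x.1)

def IsoGraph.fst : F.IsoGraph ⥤ A :=
  inducedFunctor _

def IsoGraph.snd : F.IsoGraph ⥤ B :=
  (IsoGraph.fst F ⋙ F).copyObj (fun x => x.2.1) (fun x => x.2.2)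

instance IsoGraph.full_fst : (IsoGraph.fst F).Full := InducedCategory.full _

instance IsoGraph.faithful_fst : (IsoGraph.fst F).Faithful := InducedCategory.faithful _

instance IsoGraph.full_snd [F.Full] : (IsoGraph.snd F).Full :=
  Full.of_iso (isoCopyObj _ _ _)

instance IsoGraph.faithful_snd [F.Faithful] : (IsoGraph.snd F).Faithful :=
  Faithful.of_iso (isoCopyObj _ _ _)

theorem IsoGraph.fst_surjective : Function.Surjective (IsoGraph.fst F).obj :=
  fun a => ⟨⟨a, F.obj a, Iso.refl _⟩, rfl⟩

theorem IsoGraph.snd_surjective [F.EssSurj] : Function.Surjective (IsoGraph.snd F).obj :=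
  fun b => ⟨⟨F.objPreimage b, b, F.objObjPreimageIso b⟩, rfl⟩

end Functor

end CategoryTheory

theorem StrongEquivSpan.of_equivalence {A B : Type u} [Category.{v} A] [Category.{v} B]
    (e : A ≌ B) : StrongEquivSpan A B :=
  open Functor.IsoGraph in
  ⟨Cat.of e.functor.IsoGraph, fst _, snd _, full_fst _, faithful_fst _, fst_surjective _,
    full_snd _, faithful_snd _, snd_surjective _⟩

theorem strongEquivSpan_iff_nonempty_equivalence {A B : Type u} [Category.{v} A]
    [Category.{v} B] : StrongEquivSpan A B ↔ Nonempty (A ≌ B) := by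
  refine ⟨?_, fun ⟨e⟩ => .of_equivalence e⟩
  rintro ⟨P, F, G, _, _, hF, _, _, hG⟩
  exact nonempty_equivalence_of_surjective_span F G hF hG

/-- The relation "there exists a strong equivalence span between `A` and `B`"
is an equivalence relation on categories: reflexive, symmetric and transitive.  In
particular, given fully faithful surjective-on-objects functors `D ⥤ A`, `D ⥤ B` and
`E ⥤ B`, `E ⥤ C`, there are a category `P` and fully faithful surjective-on-objects
functors `P ⥤ A` and `P ⥤ C`. -/
theorem strongEquivSpan_equivalence :
    (∀ (A : Type u) [Category.{v} A], StrongEquivSpan A A) ∧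
    (∀ (A B : Type u) [Category.{v} A] [Category.{v} B],
      StrongEquivSpan A B → StrongEquivSpan B A) ∧
    (∀ (A B C : Type u) [Category.{v} A] [Category.{v} B] [Category.{v} C],
      StrongEquivSpan A B → StrongEquivSpan B C → StrongEquivSpan A C) ∧
    (∀ (A B C D E : Type u) [Category.{v} A] [Category.{v} B] [Category.{v} C]
      [Category.{v} D] [Category.{v} E]
      (F : D ⥤ A) (G : D ⥤ B) (H : E ⥤ B) (K : E ⥤ C),
      F.Full → F.Faithful → Function.Surjective F.obj →
      G.Full → G.Faithful → Function.Surjective G.obj →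
      H.Full → H.Faithful → Function.Surjective H.obj →
      K.Full → K.Faithful → Function.Surjective K.obj →
      ∃ (P : Cat.{v, max u v}) (L : P ⥤ A) (M : P ⥤ C),
        L.Full ∧ L.Faithful ∧ Function.Surjective L.obj ∧
        M.Full ∧ M.Faithful ∧ Function.Surjective M.obj) := by
  simp only [strongEquivSpan_iff_nonempty_equivalence]
  refine ⟨fun A _ => ⟨.refl⟩, fun A B _ _ ⟨e⟩ => ⟨e.symm⟩,
    fun A B C _ _ _ ⟨e₁⟩ ⟨e₂⟩ => ⟨e₁.trans e₂⟩, ?_⟩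
  intro A B C D E _ _ _ _ _ F G H K _ _ hF _ _ hG _ _ hH _ _ hK
  obtain ⟨e₁⟩ := nonempty_equivalence_of_surjective_span F G hF hG
  obtain ⟨e₂⟩ := nonempty_equivalence_of_surjective_span H K hH hK
  exact StrongEquivSpan.of_equivalence (e₁.trans e₂)
end
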